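/- arXiv:2508.06091 — 5 statements merged into one kernel-verified Lean document; each statement's English description precedes it below -/
import Mathlib

section
/- Let V be a finite set and E a binary relation on V. Then E is a strict linear order on V if and only if E is irreflexive, total (for all distinct u,v ∈ V, E(u,v) or E(v,u) holds), and the successor-count map v ↦ |{w ∈ V : E(v,w)}| is injective. -/
/-- A strict linear order on a type `V`: an irreflexive, transitive and total
binary relation. -/
def IsStrictLinearOrderRel {V : Type} (E : V → V → Prop) : Prop :=
  (∀ v, ¬ E v v) ∧ (∀ u v w, E u v → E v w → E u w) ∧ (∀ u v : V, u ≠ v → E u v ∨ E v u)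

open Finset in
/-- over a finite set, `E` is a strict linear order iff it is irreflexive,
total, and the successor-count map `v ↦ |{w : E v w}|` is injective. -/
theorem stmt0 {V : Type} [Fintype V] (E : V → V → Prop) :
    IsStrictLinearOrderRel E ↔
      ((∀ v, ¬ E v v) ∧ (∀ u v : V, u ≠ v → E u v ∨ E v u) ∧
        Function.Injective (fun v => Nat.card {w | E v w})) := by
  classical
  have hdeg : ∀ v : V, Nat.card {w | E v w} = (univ.filter (fun w => E v w)).card := by
    intro v
    simp [Nat.card_eq_fintype_card, Fintype.card_subtype]
  set deg : V → ℕ := fun v => (univ.filter (fun w => E v w)).card with hdegdef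
  have hdeg' : ∀ v : V, Nat.card {w | E v w} = deg v := hdeg
  constructor
  · rintro ⟨irr, trans, tot⟩
    refine ⟨irr, tot, ?_⟩
    have key : ∀ a b : V, E a b → deg b < deg a := by
      intro a b hab
      apply Finset.card_lt_card
      constructor
      · intro w hw
        simp only [mem_filter, mem_univ, true_and] at hw ⊢
        exact trans a b w hab hw
      · intro hsub
        have : b ∈ univ.filter (fun w => E a w) := by simp [hab]
        have := hsub this
        simp only [mem_filter, mem_univ, true_and] at this
        exact irr b this
    intro u v h
    simp only [hdeg'] at h
    by_contra hne
    rcases tot u v hne with hE | hE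
    · exact absurd h (by have := key u v hE; omega)
    · exact absurd h (by have := key v u hE; omega)
  · rintro ⟨irr, tot, inj⟩
    have dinj : Function.Injective deg := by
      intro a b h
      apply inj
      simp only [hdeg']
      exact h
    set n := Fintype.card V with hn
    have hlt : ∀ v : V, deg v < n := by
      intro v
      have hv : v ∉ univ.filter (fun w => E v w) := by simp [irr v]
      calc deg v < univ.card :=
            Finset.card_lt_card ⟨Finset.subset_univ _, fun h => hv (h (mem_univ v))⟩
        _ = n := Finset.card_univ
    have himg : univ.image deg = range n := by
      apply Finset.eq_of_subset_of_card_le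
      · intro k hk
        simp only [mem_image] at hk
        obtain ⟨v, _, rfl⟩ := hk
        exact mem_range.2 (hlt v)
      · rw [Finset.card_range, Finset.card_image_of_injective _ dinj]
        simp [hn]
    have hcard : ∀ k, k ≤ n → (univ.filter (fun w => deg w < k)).card = k := by
      intro k hk
      have h1 : (univ.filter (fun w => deg w < k)).image deg
          = (univ.image deg).filter (fun m => m < k) := by
        rw [Finset.filter_image]
      have h2 : (range n).filter (fun m => m < k) = range k := by
        ext m; simp only [mem_filter, mem_range]; omega
      have := Finset.card_image_of_injective (univ.filter (fun w => deg w < k)) dinj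
      rw [h1, himg, h2, Finset.card_range] at this
      exact this.symm
    have main : ∀ k, ∀ v : V, deg v = k →
        univ.filter (fun w => E v w) = univ.filter (fun w => deg w < k) := by
      intro k
      induction k using Nat.strong_induction_on with
      | _ k ih =>
        intro v hv
        have hsub : univ.filter (fun w => deg w < k) ⊆ univ.filter (fun w => E v w) := by
          intro w hw
          simp only [mem_filter, mem_univ, true_and] at hw ⊢
          have hAw := ih (deg w) hw w rfl
          have hnot : ¬ E w v := by
            intro hE
            have : v ∈ univ.filter (fun x => E w x) := by simp [hE]
            rw [hAw] at this
            simp only [mem_filter, mem_univ, true_and, hv] at this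
            omega
          have hne : v ≠ w := by
            rintro rfl
            omega
          rcases tot v w hne with h | h
          · exact h
          · exact absurd h hnot
        apply (Finset.eq_of_subset_of_card_le hsub ?_).symm
        rw [hcard k (le_of_lt (hv ▸ hlt v))]
        exact le_of_eq hv
    have hEiff : ∀ u v : V, E u v ↔ deg v < deg u := by
      intro u v
      constructor
      · intro h
        have : v ∈ univ.filter (fun w => E u w) := by simp [h]
        rw [main (deg u) u rfl] at this
        simpa using this
      · intro h
        have : v ∈ univ.filter (fun w => deg w < deg u) := by simp [h]
        rw [← main (deg u) u rfl] at this
        simpa using this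
    refine ⟨irr, ?_, tot⟩
    intro u v w huv hvw
    rw [hEiff] at huv hvw ⊢
    omega
end

section
/- Let V be a finite set and E a binary relation on V that is irreflexive, total (for all distinct u,v ∈ V, E(u,v) or E(v,u) holds), and such that the successor-count map v ↦ |{w ∈ V : E(v,w)}| is injective. Then for all u,v ∈ V: E(u,v) holds if and only if |{w ∈ V : E(u,w)}| > |{w ∈ V : E(v,w)}|. -/
open Finset

/-- if `E` is irreflexive, total, and the successor-count map is injective,
then `E u v` holds iff `u` has strictly more successors than `v`. -/
theorem stmt1 {V : Type} [Fintype V] (E : V → V → Prop)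
    (hirr : ∀ v, ¬ E v v)
    (htot : ∀ u v : V, u ≠ v → E u v ∨ E v u)
    (hinj : Function.Injective (fun v => Nat.card {w | E v w})) :
    ∀ u v : V, E u v ↔ Nat.card {w | E u w} > Nat.card {w | E v w} := by
  classical
  set n := Fintype.card V with hn
  let d : V → ℕ := fun v => (univ.filter (fun w => E v w)).card
  have hd : ∀ x : V, Nat.card {w | E x w} = d x := by
    intro x
    simp only [Nat.card_eq_fintype_card]
    simp [d, Fintype.card_subtype]
  have hinj' : Function.Injective d := by
    intro a b h
    exact hinj (by simp only [hd]; exact h)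
  have hlt : ∀ x : V, d x < n := by
    intro x
    have h1 : univ.filter (fun w => E x w) ⊆ univ.erase x := by
      intro w hw
      simp only [mem_filter] at hw
      exact mem_erase.2 ⟨fun h => hirr x (h ▸ hw.2), mem_univ w⟩
    calc d x ≤ (univ.erase x).card := card_le_card h1
      _ < univ.card := card_erase_lt_of_mem (mem_univ x)
      _ = n := card_univ
  have himg : univ.image d = range n := by
    apply eq_of_subset_of_card_le
    · intro k hk
      simp only [mem_image] at hk
      obtain ⟨x, _, hx⟩ := hk
      rw [mem_range, ← hx]; exact hlt x
    · rw [card_range, card_image_of_injective _ hinj', card_univ]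
  have hcardB : ∀ k, k ≤ n → (univ.filter (fun x => d x < k)).card = k := by
    intro k hk
    have h1 : (univ.filter (fun x => d x < k)).image d = (univ.image d).filter (· < k) :=
      by rw [Finset.filter_image]
    have h2 : (range n).filter (· < k) = range k := by
      ext m; simp only [mem_filter, mem_range]; omega
    rw [← card_image_of_injective (univ.filter (fun x => d x < k)) hinj', h1, himg, h2,
      card_range]
  -- sum of scores
  set A := (univ ×ˢ univ).filter (fun p : V × V => E p.1 p.2) with hA
  set B := (univ ×ˢ univ).filter (fun p : V × V => E p.2 p.1) with hB
  have cardA : A.card = ∑ x : V, d x := by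
    rw [Finset.card_eq_sum_card_fiberwise (f := Prod.fst) (t := univ) (fun x _ => mem_univ _)]
    refine Finset.sum_congr rfl fun x _ => ?_
    have : A.filter (fun p => p.1 = x) = (univ.filter (fun w => E x w)).image (fun w => (x, w)) := by
      ext ⟨a, b⟩
      simp only [hA, mem_filter, mem_product, mem_univ, true_and, mem_image, Prod.mk.injEq]
      constructor
      · rintro ⟨hab, rfl⟩; exact ⟨b, hab, rfl, rfl⟩
      · rintro ⟨w, hw, rfl, rfl⟩; exact ⟨hw, rfl⟩
    rw [this, card_image_of_injective _ (fun a b h => (Prod.mk.injEq _ _ _ _ ▸ h : _ ∧ _).2)]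
  have cardB2 : B.card = ∑ x : V, d x := by
    rw [Finset.card_eq_sum_card_fiberwise (f := Prod.snd) (t := univ) (fun x _ => mem_univ _)]
    refine Finset.sum_congr rfl fun x _ => ?_
    have : B.filter (fun p => p.2 = x) = (univ.filter (fun w => E x w)).image (fun w => (w, x)) := by
      ext ⟨a, b⟩
      simp only [hB, mem_filter, mem_product, mem_univ, true_and, mem_image, Prod.mk.injEq]
      constructor
      · rintro ⟨hab, rfl⟩; exact ⟨a, hab, rfl, rfl⟩
      · rintro ⟨w, hw, rfl, rfl⟩; exact ⟨hw, rfl⟩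
    rw [this, card_image_of_injective _ (fun a b h => (Prod.mk.injEq _ _ _ _ ▸ h : _ ∧ _).1)]
  have hsumval : (∑ x : V, d x) * 2 = n * n - n := by
    have h1 : ∑ x : V, d x = ∑ k ∈ range n, k := by
      rw [← himg, Finset.sum_image (fun a _ b _ h => hinj' h)]
    rw [h1, Finset.sum_range_id_mul_two, Nat.mul_sub, mul_one]
  have hABunion : A ∪ B = univ.offDiag := by
    ext ⟨a, b⟩
    simp only [hA, hB, mem_union, mem_filter, mem_product, mem_univ, true_and, mem_offDiag,
      ne_eq]
    constructor
    · rintro (h | h)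
      · exact fun he => hirr a (he ▸ h)
      · exact fun he => hirr a (he ▸ h)
    · intro hne
      exact htot a b hne
  have hasym : ∀ a b : V, E a b → ¬ E b a := by
    intro a b hab hba
    have hcard := Finset.card_union_add_card_inter A B
    rw [hABunion, Finset.offDiag_card, card_univ, cardA, cardB2, ← hn] at hcard
    have hABempty : (A ∩ B).card = 0 := by omega
    have hmem : (a, b) ∈ A ∩ B := by
      simp only [mem_inter, hA, hB, mem_filter, mem_product, mem_univ, true_and]
      exact ⟨hab, hba⟩
    rw [Finset.card_eq_zero] at hABempty
    rw [hABempty] at hmem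
    exact absurd hmem (Finset.notMem_empty _)
  -- main downward induction
  have key : ∀ j : ℕ, ∀ x : V, n - 1 - d x = j →
      univ.filter (fun w => E x w) = univ.filter (fun w => d w < d x) := by
    intro j
    induction j using Nat.strong_induction_on with
    | _ j ih =>
      intro x hx
      have hsub : univ.filter (fun w => E x w) ⊆ univ.filter (fun w => d w < d x) := by
        intro w hw
        simp only [mem_filter] at hw ⊢
        refine ⟨mem_univ _, ?_⟩
        have hwx : w ≠ x := fun h => hirr x (h ▸ hw.2)
        have hne : d w ≠ d x := fun h => hwx (hinj' h)
        rcases lt_or_gt_of_ne hne with h | h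
        · exact h
        · exfalso
          have hj' : n - 1 - d w < j := by
            have h1 := hlt w; have h2 := hlt x; omega
          have heq := ih _ hj' w rfl
          have hx' : x ∈ univ.filter (fun y => E w y) := by
            rw [heq]; simp only [mem_filter, mem_univ, true_and]; exact h
          simp only [mem_filter] at hx'
          exact hasym x w hw.2 hx'.2
      refine eq_of_subset_of_card_le hsub ?_
      rw [hcardB (d x) (le_of_lt (hlt x))]
  intro u v
  rw [hd, hd]
  constructor
  · intro h
    have hne : u ≠ v := fun he => hirr u (he ▸ h)
    have hdne : d u ≠ d v := fun he => hne (hinj' he)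
    rcases lt_or_gt_of_ne hdne with hlt' | hgt
    · exfalso
      have heq := key _ v rfl
      have hu : u ∈ univ.filter (fun w => E v w) := by
        rw [heq]; simp only [mem_filter, mem_univ, true_and]; exact hlt'
      exact hasym u v h (mem_filter.1 hu).2
    · exact hgt
  · intro h
    have heq := key _ u rfl
    have hv : v ∈ univ.filter (fun w => E u w) := by
      rw [heq]; simp only [mem_filter, mem_univ, true_and]; exact h
    exact (mem_filter.1 hv).2
end

section
/- Let V be a finite set and E an irreflexive binary relation on V, and for v ∈ V let indeg(v) = |{w ∈ V : E(w,v)}|. Then E is a strict linear order on V if and only if (a) the map v ↦ indeg(v) is injective, and (b) for every v ∈ V, the set {indeg(w) : w ∈ V, E(w,v)} equals {0, 1, …, indeg(v)−1}. -/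
/-- The in-degree of `v` with respect to `E`. -/
noncomputable def indeg {V : Type} [Fintype V] (E : V → V → Prop) (v : V) : ℕ :=
  Nat.card {w | E w v}

/-- for an irreflexive relation `E` on a finite set, `E` is a strict linear
order iff (a) the in-degree map is injective and (b) for every `v` the set of in-degrees
of its in-neighbours is `{0, 1, …, indeg v − 1}`. -/
theorem stmt2 {V : Type} [Fintype V] (E : V → V → Prop) (hirr : ∀ v, ¬ E v v) :
    IsStrictLinearOrderRel E ↔
      (Function.Injective (indeg E) ∧
        ∀ v : V, (indeg E) '' {w | E w v} = Set.Iio (indeg E v)) := by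
  classical
  constructor
  · rintro ⟨hi, ht, htot⟩
    have hfin : ∀ v : V, {w | E w v}.Finite := fun v => Set.toFinite _
    have hmono : ∀ u v, E u v → indeg E u < indeg E v := by
      intro u v huv
      have hsub : {w | E w u} ⊆ {w | E w v} := fun w hw => ht w u v hw huv
      have hss : {w | E w u} ⊂ {w | E w v} :=
        ⟨hsub, fun h => hi u (h huv)⟩
      have := Set.ncard_lt_ncard hss (hfin v)
      rwa [indeg, indeg, Nat.card_coe_set_eq, Nat.card_coe_set_eq]
    have hinj : Function.Injective (indeg E) := by
      intro u v h
      by_contra hne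
      rcases htot u v hne with h1 | h1
      · exact absurd h (Nat.ne_of_lt (hmono u v h1))
      · exact absurd h.symm (Nat.ne_of_lt (hmono v u h1))
    refine ⟨hinj, fun v => ?_⟩
    have hsub : indeg E '' {w | E w v} ⊆ Set.Iio (indeg E v) := by
      rintro _ ⟨w, hw, rfl⟩; exact hmono w v hw
    apply Set.eq_of_subset_of_ncard_le hsub _ (Set.finite_Iio _)
    have h1 : (indeg E '' {w | E w v}).ncard = {w | E w v}.ncard :=
      Set.ncard_image_of_injective _ hinj
    have h2 : (Set.Iio (indeg E v)).ncard = indeg E v := by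
      rw [← Finset.coe_range, Set.ncard_coe_finset, Finset.card_range]
    rw [h1, h2, indeg, Nat.card_coe_set_eq]
  · rintro ⟨hinj, himg⟩
    have hlt : ∀ u v, E u v → indeg E u < indeg E v := by
      intro u v h
      have : indeg E u ∈ Set.Iio (indeg E v) := himg v ▸ ⟨u, h, rfl⟩
      exact this
    have key : ∀ u v, indeg E u < indeg E v → E u v := by
      intro u v h
      have hm : indeg E u ∈ indeg E '' {w | E w v} := by rw [himg v]; exact h
      rcases hm with ⟨w, hw, hwe⟩
      rwa [hinj hwe] at hw
    refine ⟨hirr, fun u v w h1 h2 => key u w (lt_trans (hlt _ _ h1) (hlt _ _ h2)),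
      fun u v hne => ?_⟩
    rcases lt_or_gt_of_ne (fun h => hne (hinj h)) with h | h
    · exact Or.inl (key u v h)
    · exact Or.inr (key v u h)
end

section
/- Let ℓ, c ∈ ℕ and n = ℓ·c + 1. Let G be the directed labelled graph of dimension 1 with nodes v_{−n},…,v_n, edge relation E = {(v_i,v_j) : −n ≤ i < j ≤ n}, and all labels 0, and let G' have the same nodes and labels and edge relation E' = (E ∖ {(v_{−1},v_1)}) ∪ {(v_1,v_{−1})}. Then the edge relation of G is a strict linear order, the edge relation of G' is not a strict linear order, and for every i ∈ {−n,…,n}, W^ℓ_c(v_i) computed in G equals W^ℓ_c(v_i) computed in G'. -/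
/-- The multiset `⟦f w : w ∈ V, p w⟧` of values of `f` on the elements satisfying `p`. -/
noncomputable def msetOf {V α : Type} [Fintype V] (p : V → Prop) (f : V → α) : Multiset α :=
  letI := Classical.decPred p
  ((Finset.univ.filter p).val.map f)

/-- Truncate every multiplicity in a multiset to at most `c` (the `c`-bounded multiset). -/
noncomputable def trunc {α : Type} (c : ℕ) (M : Multiset α) : Multiset α :=
  letI := Classical.decEq α
  M.toFinset.val.bind fun a => Multiset.replicate (min c (M.count a)) a

/-- The type of colours of the (bounded) Weisfeiler–Leman algorithm after `ℓ` rounds, for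
graphs of dimension `d`: a colour of round `ℓ+1` is a tuple of a colour of round `ℓ`
and four multisets of colours of round `ℓ`. -/
def WLC (d : ℕ) : ℕ → Type
  | 0 => Fin d → Bool
  | (ℓ+1) => WLC d ℓ × Multiset (WLC d ℓ) × Multiset (WLC d ℓ) × Multiset (WLC d ℓ) ×
      Multiset (WLC d ℓ)

/-- The `c`-bounded Weisfeiler–Leman colouring `W^ℓ_c` on the directed labelled graph
`(V, E, lab)`:  `W^0_c(v) = lab v` and `W^{ℓ+1}_c(v)` is the tuple of `W^ℓ_c(v)` and the
`c`-bounded multisets of the previous colours over `←N(v)∩→N(v)`, `←N(v)∖→N(v)`,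
`→N(v)∖←N(v)` and `V∖(N(v)∪{v})`. -/
noncomputable def WL {d : ℕ} {V : Type} [Fintype V] (E : V → V → Prop)
    (lab : V → Fin d → Bool) (c : ℕ) : (ℓ : ℕ) → V → WLC d ℓ
  | 0, v => lab v
  | (ℓ+1), v =>
      (WL E lab c ℓ v,
       trunc c (msetOf (fun w => E w v ∧ E v w) (WL E lab c ℓ)),
       trunc c (msetOf (fun w => E w v ∧ ¬ E v w) (WL E lab c ℓ)),
       trunc c (msetOf (fun w => E v w ∧ ¬ E w v) (WL E lab c ℓ)),
       trunc c (msetOf (fun w => ¬ (E w v ∨ E v w) ∧ w ≠ v) (WL E lab c ℓ)))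

/-- The vertex set `{v_{-n}, …, v_n}`, identified with the integer interval `[-n, n]`. -/
abbrev IntNode (n : ℕ) : Type := {i : ℤ // i ∈ Finset.Icc (-(n : ℤ)) (n : ℤ)}

/-!
In the linear order, induction on `k` shows that all nodes `v_i` with `|i| + k·c ≤ n` get the
same colour `W^k_c`: each of them has at least `c` predecessors and `c` successors of that
colour, so the `c`-bounded multisets of two of them differ only in multiplicities that are
truncated to `c` anyway. Both graphs are tournaments, so only in- and out-neighbourhoods
matter. Reversing the edge between `v_{-1}` and `v_1` moves one node of the central block
between the in- and out-neighbourhood of `v_{±1}`; as long as `k·c < n` these neighbourhoods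
already contain `c` nodes of the same colour, so the move is invisible after truncation.
-/

open Finset

theorem trunc_zero {α : Type} (c : ℕ) : trunc c (0 : Multiset α) = 0 := by
  simp [trunc]

theorem count_trunc {α : Type} [DecidableEq α] (c : ℕ) (M : Multiset α) (a : α) :
    (trunc c M).count a = min c (M.count a) := by
  have hdec : Classical.decEq α = ‹DecidableEq α› := Subsingleton.elim _ _
  rw [trunc, hdec, Multiset.count_bind]
  change ∑ b ∈ M.toFinset, (Multiset.replicate (min c (M.count b)) b).count a = _
  simp only [Multiset.count_replicate, sum_ite_eq', Multiset.mem_toFinset]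
  split_ifs with ha
  · rfl
  · simp [Multiset.count_eq_zero_of_notMem ha]

section BoundedMultisets

variable {V α : Type} [Fintype V]

theorem count_msetOf [DecidableEq α] (p : V → Prop) [DecidablePred p] (f : V → α) (a : α) :
    (msetOf p f).count a = #{w | p w ∧ f w = a} := by
  have hdec : Classical.decPred p = ‹DecidablePred p› := Subsingleton.elim _ _
  rw [msetOf, hdec, Multiset.count_map, ← filter_val, card_val, filter_filter]
  simp only [eq_comm]

theorem msetOf_congr {p q : V → Prop} (h : ∀ w, p w ↔ q w) (f : V → α) :
    msetOf p f = msetOf q f := by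
  rw [funext fun w => propext (h w)]

theorem msetOf_eq_zero {p : V → Prop} (h : ∀ w, ¬ p w) (f : V → α) : msetOf p f = 0 := by
  simp [msetOf, h]

theorem trunc_msetOf_eq_of_forall_ne [DecidableEq α] {c : ℕ} {p q : V → Prop} {f : V → α}
    {χ : α} (hpq : ∀ w, f w ≠ χ → (p w ↔ q w))
    (hp : c ≤ (msetOf p f).count χ) (hq : c ≤ (msetOf q f).count χ) :
    trunc c (msetOf p f) = trunc c (msetOf q f) := by
  classical
  ext a
  rw [count_trunc, count_trunc]
  by_cases ha : a = χ
  · subst ha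
    omega
  · rw [count_msetOf, count_msetOf]
    congr 2
    ext w
    simp only [mem_filter, mem_univ, true_and]
    exact ⟨fun h => ⟨(hpq w (h.2 ▸ ha)).1 h.1, h.2⟩,
      fun h => ⟨(hpq w (h.2 ▸ ha)).2 h.1, h.2⟩⟩

end BoundedMultisets

theorem WL_succ_of_asymm_of_total {d : ℕ} {V : Type} [Fintype V] {E : V → V → Prop}
    (hasymm : ∀ u v, E u v → ¬ E v u) (htotal : ∀ u v, u ≠ v → E u v ∨ E v u)
    (lab : V → Fin d → Bool) (c k : ℕ) (v : V) :
    WL E lab c (k + 1) v =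
      (WL E lab c k v, 0, trunc c (msetOf (fun w => E w v) (WL E lab c k)),
        trunc c (msetOf (fun w => E v w) (WL E lab c k)), 0) := by
  have hmutual : msetOf (fun w => E w v ∧ E v w) (WL E lab c k) = 0 :=
    msetOf_eq_zero (fun w h => hasymm w v h.1 h.2) _
  have hnonadj : msetOf (fun w => ¬ (E w v ∨ E v w) ∧ w ≠ v) (WL E lab c k) = 0 :=
    msetOf_eq_zero (fun w h => h.1 (htotal w v h.2)) _
  rw [WL, hmutual, hnonadj, trunc_zero,
    msetOf_congr (fun w => and_iff_left_of_imp (hasymm w v)),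
    msetOf_congr (fun w => and_iff_left_of_imp (hasymm v w))]

theorem WL_succ_eq_of_asymm_of_total {d : ℕ} {V V' : Type} [Fintype V] [Fintype V']
    {E : V → V → Prop} {E' : V' → V' → Prop}
    (hasymm : ∀ u v, E u v → ¬ E v u) (htotal : ∀ u v, u ≠ v → E u v ∨ E v u)
    (hasymm' : ∀ u v, E' u v → ¬ E' v u) (htotal' : ∀ u v, u ≠ v → E' u v ∨ E' v u)
    {lab : V → Fin d → Bool} {lab' : V' → Fin d → Bool} {c k : ℕ} {v : V} {v' : V'}
    (hprev : WL E lab c k v = WL E' lab' c k v')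
    (hin : trunc c (msetOf (fun w => E w v) (WL E lab c k)) =
      trunc c (msetOf (fun w => E' w v') (WL E' lab' c k)))
    (hout : trunc c (msetOf (fun w => E v w) (WL E lab c k)) =
      trunc c (msetOf (fun w => E' v' w) (WL E' lab' c k))) :
    WL E lab c (k + 1) v = WL E' lab' c (k + 1) v' := by
  rw [WL_succ_of_asymm_of_total hasymm htotal, WL_succ_of_asymm_of_total hasymm' htotal',
    hprev, hin, hout]

section IntNodeGraphs

variable {n : ℕ} {E E' : IntNode n → IntNode n → Prop}

theorem card_le_count_msetOf {α : Type} [DecidableEq α] {q : IntNode n → Prop}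
    {f : IntNode n → α} {χ : α} {a b : ℤ} (ha : -(n : ℤ) ≤ a) (hb : b ≤ n)
    (h : ∀ w : IntNode n, a ≤ w.val → w.val ≤ b → q w ∧ f w = χ) :
    (b + 1 - a).toNat ≤ (msetOf q f).count χ := by
  classical
  rw [count_msetOf, ← Int.card_Icc,
    ← filter_true_of_mem (s := Icc a b) (p := (· ∈ Icc (-(n : ℤ)) n)) fun i hi => by
      simp only [mem_Icc] at hi ⊢; omega,
    ← card_subtype]
  exact card_le_card fun w hw => by
    simp only [mem_subtype, mem_Icc, mem_filter, mem_univ, true_and] at hw ⊢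
    exact h w hw.1 hw.2

theorem asymm_of_lt (hE : ∀ i j : IntNode n, E i j ↔ i.val < j.val) (u v : IntNode n) :
    E u v → ¬ E v u := by
  rw [hE, hE]; omega

theorem total_of_lt (hE : ∀ i j : IntNode n, E i j ↔ i.val < j.val) (u v : IntNode n)
    (huv : u ≠ v) : E u v ∨ E v u := by
  rw [hE, hE]
  have := Subtype.val_injective.ne huv
  omega

theorem isStrictLinearOrderRel_of_lt (hE : ∀ i j : IntNode n, E i j ↔ i.val < j.val) :
    IsStrictLinearOrderRel E :=
  ⟨fun v => by rw [hE]; exact lt_irrefl _, fun u v w => by simp only [hE]; exact lt_trans,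
    total_of_lt hE⟩

theorem WL_eq_of_natAbs_le (hE : ∀ i j : IntNode n, E i j ↔ i.val < j.val) {d : ℕ}
    {lab : IntNode n → Fin d → Bool} (hlab : ∀ u v, lab u = lab v) (c : ℕ) :
    ∀ (k : ℕ) (i j : IntNode n), i.val.natAbs + k * c ≤ n → j.val.natAbs + k * c ≤ n →
      WL E lab c k i = WL E lab c k j := by
  classical
  intro k
  induction k with
  | zero => exact fun i j _ _ => hlab i j
  | succ k ih =>
    intro i j hi hj
    rw [add_one_mul] at hi hj
    have hblock : ∀ w : IntNode n, w.val.natAbs + k * c ≤ n →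
        WL E lab c k w = WL E lab c k i :=
      fun w hw => ih w i hw (by omega)
    have hside : ∀ w : IntNode n, WL E lab c k w ≠ WL E lab c k i →
        n < w.val.natAbs + k * c :=
      fun w hw => by by_contra h; exact hw (hblock w (by omega))
    refine WL_succ_eq_of_asymm_of_total (asymm_of_lt hE) (total_of_lt hE) (asymm_of_lt hE)
      (total_of_lt hE) (ih i j (by omega) (by omega)) ?_ ?_
    · refine trunc_msetOf_eq_of_forall_ne (χ := WL E lab c k i)
        (fun w hw => by rw [hE, hE]; have := hside w hw; omega) ?_ ?_ <;>
      exact le_trans (by omega) (card_le_count_msetOf (a := ((k * c : ℕ) : ℤ) - n)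
        (b := ((k * c : ℕ) : ℤ) - n + c - 1) (by omega) (by omega)
        fun w h1 h2 => ⟨by rw [hE]; omega, hblock w (by omega)⟩)
    · refine trunc_msetOf_eq_of_forall_ne (χ := WL E lab c k i)
        (fun w hw => by rw [hE, hE]; have := hside w hw; omega) ?_ ?_ <;>
      exact le_trans (by omega) (card_le_count_msetOf (a := n - ((k * c : ℕ) : ℤ) - c + 1)
        (b := n - ((k * c : ℕ) : ℤ)) (by omega) (by omega)
        fun w h1 h2 => ⟨by rw [hE]; omega, hblock w (by omega)⟩)

theorem asymm_of_swap (hE' : ∀ i j : IntNode n, E' i j ↔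
      ((i.val < j.val ∧ ¬ (i.val = -1 ∧ j.val = 1)) ∨ (i.val = 1 ∧ j.val = -1)))
    (u v : IntNode n) : E' u v → ¬ E' v u := by
  rw [hE', hE']; omega

theorem total_of_swap (hE' : ∀ i j : IntNode n, E' i j ↔
      ((i.val < j.val ∧ ¬ (i.val = -1 ∧ j.val = 1)) ∨ (i.val = 1 ∧ j.val = -1)))
    (u v : IntNode n) (huv : u ≠ v) : E' u v ∨ E' v u := by
  rw [hE', hE']
  have := Subtype.val_injective.ne huv
  omega

theorem WL_eq_of_swap (hE : ∀ i j : IntNode n, E i j ↔ i.val < j.val)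
    (hE' : ∀ i j : IntNode n, E' i j ↔
      ((i.val < j.val ∧ ¬ (i.val = -1 ∧ j.val = 1)) ∨ (i.val = 1 ∧ j.val = -1)))
    {d : ℕ} {lab : IntNode n → Fin d → Bool} (hlab : ∀ u v, lab u = lab v) (c : ℕ) :
    ∀ k : ℕ, k * c < n → ∀ v, WL E lab c k v = WL E' lab c k v := by
  classical
  intro k
  induction k with
  | zero => exact fun _ _ => rfl
  | succ k ih =>
    intro hk v
    rw [add_one_mul] at hk
    have hprev : WL E' lab c k = WL E lab c k := (funext (ih (by omega))).symm
    have hstep := WL_succ_eq_of_asymm_of_total (asymm_of_lt hE) (total_of_lt hE)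
      (asymm_of_swap hE') (total_of_swap hE') (ih (by omega) v)
    rw [hprev] at hstep
    by_cases hv : v.val ≠ 1 ∧ v.val ≠ -1
    · refine hstep ?_ ?_ <;> congr 2 <;> ext w <;> rw [hE, hE'] <;> omega
    have hblock : ∀ w : IntNode n, w.val.natAbs + k * c ≤ n →
        WL E lab c k w = WL E lab c k v :=
      fun w hw => WL_eq_of_natAbs_le hE hlab c k w v hw (by omega)
    have hside : ∀ w : IntNode n, WL E lab c k w ≠ WL E lab c k v →
        n < w.val.natAbs + k * c :=
      fun w hw => by by_contra h; exact hw (hblock w (by omega))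
    refine hstep ?_ ?_
    · refine trunc_msetOf_eq_of_forall_ne (χ := WL E lab c k v)
        (fun w hw => by rw [hE, hE']; have := hside w hw; omega) ?_ ?_ <;>
      exact le_trans (by omega) (card_le_count_msetOf (a := ((k * c : ℕ) : ℤ) - n) (b := -2)
        (by omega) (by omega) fun w h1 h2 => ⟨by simp only [hE, hE']; omega,
          hblock w (by omega)⟩)
    · refine trunc_msetOf_eq_of_forall_ne (χ := WL E lab c k v)
        (fun w hw => by rw [hE, hE']; have := hside w hw; omega) ?_ ?_ <;>
      exact le_trans (by omega) (card_le_count_msetOf (a := 2) (b := n - ((k * c : ℕ) : ℤ))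
        (by omega) (by omega) fun w h1 h2 => ⟨by simp only [hE, hE']; omega,
          hblock w (by omega)⟩)

theorem not_isStrictLinearOrderRel_of_swap (hn : 1 ≤ n)
    (hE' : ∀ i j : IntNode n, E' i j ↔
      ((i.val < j.val ∧ ¬ (i.val = -1 ∧ j.val = 1)) ∨ (i.val = 1 ∧ j.val = -1))) :
    ¬ IsStrictLinearOrderRel E' := by
  rintro ⟨-, htrans, -⟩
  have hnode : ∀ i : ℤ, i.natAbs ≤ 1 → i ∈ Icc (-(n : ℤ)) n := fun i hi => by
    rw [mem_Icc]; omega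
  have h := htrans ⟨1, hnode 1 le_rfl⟩ ⟨-1, hnode (-1) le_rfl⟩ ⟨0, hnode 0 zero_le_one⟩
    ((hE' _ _).mpr (by norm_num)) ((hE' _ _).mpr (by norm_num))
  rw [hE'] at h
  norm_num at h

end IntNodeGraphs

/-- with `n = ℓ·c+1`, the linear order `G` on `v_{-n},…,v_n` (edges
`(v_i,v_j)` for `i<j`, all labels `0`) and the graph `G'` obtained by replacing the edge
`(v_{-1},v_1)` with `(v_1,v_{-1})` satisfy: `G` is a strict linear order, `G'` is not, and
every node gets the same `c`-bounded WL colour after `ℓ` rounds in `G` and in `G'`. -/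
theorem stmt7 (ℓ c n : ℕ) (hn : n = ℓ * c + 1)
    (E E' : IntNode n → IntNode n → Prop)
    (hE : ∀ i j : IntNode n, E i j ↔ i.val < j.val)
    (hE' : ∀ i j : IntNode n, E' i j ↔
      ((i.val < j.val ∧ ¬ (i.val = -1 ∧ j.val = 1)) ∨ (i.val = 1 ∧ j.val = -1)))
    (lab : IntNode n → Fin 1 → Bool) (hlab : ∀ v i, lab v i = false) :
    IsStrictLinearOrderRel E ∧ ¬ IsStrictLinearOrderRel E' ∧
      ∀ v : IntNode n, WL E lab c ℓ v = WL E' lab c ℓ v := by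
  have hlab_const : ∀ u v, lab u = lab v := fun u v => funext fun i => by rw [hlab, hlab]
  exact ⟨isStrictLinearOrderRel_of_lt hE, not_isStrictLinearOrderRel_of_swap (by omega) hE',
    WL_eq_of_swap hE hE' hlab_const c ℓ (by omega)⟩
end

section
/- A finite undirected labelled graph H of dimension 3 is isomorphic to gad(G) for some strict linear order G if and only if H satisfies conditions φ₁, φ₂, φ₃, and φ₄. -/
/-- Vertices of the gadgetisation of a directed graph `(V, E)`: a node `v¹_u` for every
`u : V` (left summand) and, for every edge `e` of `E`, a node `v²_e` (right summand with
second component `false`) and a node `v³_e` (second component `true`). -/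
def GadV {V : Type} (E : V → V → Prop) : Type :=
  V ⊕ ({p : V × V // E p.1 p.2} × Bool)

/-- The (symmetric) adjacency relation of the gadgetisation: every edge `(u,w)` of the
original graph is replaced by the undirected path `v¹_u — v²_{(u,w)} — v³_{(u,w)} — v¹_w`. -/
def gadAdj {V : Type} (E : V → V → Prop) : GadV E → GadV E → Prop
  | Sum.inl u, Sum.inr (e, b) => (b = false ∧ e.val.1 = u) ∨ (b = true ∧ e.val.2 = u)
  | Sum.inr (e, b), Sum.inl u => (b = false ∧ e.val.1 = u) ∨ (b = true ∧ e.val.2 = u)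
  | Sum.inr (e, b), Sum.inr (e', b') => e = e' ∧ b ≠ b'
  | Sum.inl _, Sum.inl _ => False

/-- The labelling of the gadgetisation: `v¹`-nodes get label `(1,0,0)`, `v²`-nodes get
`(0,1,0)` and `v³`-nodes get `(0,0,1)`. -/
def gadLab {V : Type} (E : V → V → Prop) : GadV E → Fin 3 → Bool
  | Sum.inl _ => fun i => decide (i = 0)
  | Sum.inr (_, false) => fun i => decide (i = 1)
  | Sum.inr (_, true) => fun i => decide (i = 2)

noncomputable instance GadV.fintype {V : Type} [Fintype V] (E : V → V → Prop) :
    Fintype (GadV E) := by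
  classical
  unfold GadV
  infer_instance

/-- An isomorphism of labelled graphs: an edge-preserving and label-preserving bijection. -/
def IsoLabGraph {V₁ V₂ : Type} {d : ℕ} (E₁ : V₁ → V₁ → Prop) (lab₁ : V₁ → Fin d → Bool)
    (E₂ : V₂ → V₂ → Prop) (lab₂ : V₂ → Fin d → Bool) : Prop :=
  ∃ f : V₁ ≃ V₂, (∀ u v, E₁ u v ↔ E₂ (f u) (f v)) ∧ ∀ v, lab₁ v = lab₂ (f v)

/-- `(W, EH, labH)` is isomorphic to the gadgetisation of some (finite) strict linear
order. -/
def IsGadLin {W : Type} (EH : W → W → Prop) (labH : W → Fin 3 → Bool) : Prop :=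
  ∃ (U : Type) (_ : Fintype U) (R : U → U → Prop),
    IsStrictLinearOrderRel R ∧ IsoLabGraph EH labH (gadAdj R) (gadLab R)

/-- A gadgetised path from `u` to `z` via `w` (a `P₂` node) and `v` (a `P₃` node). -/
def GadPath {V : Type} (E : V → V → Prop) (lab : V → Fin 3 → Bool) (u w v z : V) : Prop :=
  lab u 0 = true ∧ lab w 1 = true ∧ lab v 2 = true ∧ lab z 0 = true ∧
    E u w ∧ E w v ∧ E v z

/-- There is a gadgetised edge from `u` to `z`. -/
def GadEdge {V : Type} (E : V → V → Prop) (lab : V → Fin 3 → Bool) (u z : V) : Prop :=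
  ∃ w v, GadPath E lab u w v z

/-- Condition φ₁: every node satisfies exactly one of `P₁, P₂, P₃`. -/
def phi1 {V : Type} (lab : V → Fin 3 → Bool) : Prop :=
  ∀ v : V,
    (lab v 0 = true ∧ lab v 1 = false ∧ lab v 2 = false) ∨
    (lab v 0 = false ∧ lab v 1 = true ∧ lab v 2 = false) ∨
    (lab v 0 = false ∧ lab v 1 = false ∧ lab v 2 = true)

/-- Condition φ₂: every `P₂`-node has exactly two neighbours, exactly one of them a
`P₁`-node and exactly one a `P₃`-node; every `P₃`-node has exactly two neighbours, exactly
one a `P₁`-node and exactly one a `P₂`-node; and no two `P₁`-nodes are adjacent. -/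
def phi2 {V : Type} [Fintype V] (E : V → V → Prop) (lab : V → Fin 3 → Bool) : Prop :=
  (∀ v : V, lab v 1 = true →
    Nat.card {w | E v w} = 2 ∧ Nat.card {w | E v w ∧ lab w 0 = true} = 1 ∧
      Nat.card {w | E v w ∧ lab w 2 = true} = 1) ∧
  (∀ v : V, lab v 2 = true →
    Nat.card {w | E v w} = 2 ∧ Nat.card {w | E v w ∧ lab w 0 = true} = 1 ∧
      Nat.card {w | E v w ∧ lab w 1 = true} = 1) ∧
  (∀ u v : V, lab u 0 = true → lab v 0 = true → ¬ E u v)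

/-- Condition φ₃: between any two distinct `P₁`-nodes there is exactly one gadgetised edge
in total (from `u` to `z` or from `z` to `u`). -/
def phi3 {V : Type} [Fintype V] (E : V → V → Prop) (lab : V → Fin 3 → Bool) : Prop :=
  ∀ u z : V, lab u 0 = true → lab z 0 = true → u ≠ z →
    Nat.card {p : V × V | GadPath E lab u p.1 p.2 z} +
      Nat.card {p : V × V | GadPath E lab z p.1 p.2 u} = 1

/-- Condition φ₄: there is no triangle of gadgetised edges. -/
def phi4 {V : Type} (E : V → V → Prop) (lab : V → Fin 3 → Bool) : Prop :=
  ¬ ∃ u v w : V, GadEdge E lab u v ∧ GadEdge E lab v w ∧ GadEdge E lab w u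

/-- `N₂ u`: the number of neighbours of `u` satisfying `P₂`. -/
noncomputable def N2 {V : Type} [Fintype V] (E : V → V → Prop) (lab : V → Fin 3 → Bool)
    (u : V) : ℕ :=
  Nat.card {w | E u w ∧ lab w 1 = true}

/-- Condition ψ: for all `0 ≤ i < j < |P₁|` there are `P₁`-nodes `u, w` with `N₂ u = j`,
`N₂ w = i` and a gadgetised edge from `u` to `w`. -/
def psiCond {V : Type} [Fintype V] (E : V → V → Prop) (lab : V → Fin 3 → Bool) : Prop :=
  ∀ i j : ℕ, i < j → j < Nat.card {v : V | lab v 0 = true} →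
    ∃ u w : V, lab u 0 = true ∧ lab w 0 = true ∧
      N2 E lab u = j ∧ N2 E lab w = i ∧ GadEdge E lab u w

/-!
The gadgetisation of a strict linear order satisfies φ₁–φ₄ by direct computation, and the four
conditions are invariant under isomorphism.

Conversely, order the `P₁`-nodes of `H` by gadgetised edges. By φ₃ this relation is total and
asymmetric; by φ₄ it is irreflexive, and transitive because a missing edge `a → c` above
`a → b → c` would, by totality, be an edge `c → a` closing a triangle. By φ₂ every `P₂`- and
every `P₃`-node lies on a gadgetised path, and such a path is determined by either of its middle
nodes; by φ₃ it is also determined by its endpoints. So sending the two gadget nodes of an edge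
`(a, b)` of this order to the middle nodes of the gadgetised path from `a` to `b` is a bijection
from the gadgetisation onto `H`, and φ₂ shows that it preserves adjacency.
-/

theorem Nat.card_setOf_eq_one_iff {α : Type*} {p : α → Prop} :
    Nat.card {x | p x} = 1 ↔ ∃! x, p x := by
  rw [Nat.card_eq_one_iff_exists]
  constructor
  · rintro ⟨⟨x, hx⟩, h⟩
    exact ⟨x, hx, fun y hy => congrArg Subtype.val (h ⟨y, hy⟩)⟩
  · rintro ⟨x, hx, h⟩
    exact ⟨⟨x, hx⟩, fun y => Subtype.ext (h y y.2)⟩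

theorem Nat.card_setOf_pos_iff {α : Type*} [Finite α] {p : α → Prop} :
    0 < Nat.card {x | p x} ↔ ∃ x, p x := by
  rw [Nat.card_coe_set_eq, Set.ncard_pos]
  rfl

theorem Nat.card_setOf_comp_equiv {α β : Type*} (f : α ≃ β) (p : β → Prop) :
    Nat.card {a | p (f a)} = Nat.card {b | p b} :=
  Nat.card_congr (f.subtypeEquiv fun _ => Iff.rfl)

theorem eq_of_card_setOf_eq_two {α : Type*} {p : α → Prop} (h : Nat.card {x | p x} = 2)
    {a b c : α} (ha : p a) (hb : p b) (hc : p c) (hab : a ≠ b) (hac : a ≠ c) : b = c := by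
  obtain ⟨y, -, hy⟩ := (Nat.card_eq_two_iff' (⟨a, ha⟩ : {x | p x})).1 h
  have hby := hy ⟨b, hb⟩ fun h => hab (congrArg Subtype.val h).symm
  have hcy := hy ⟨c, hc⟩ fun h => hac (congrArg Subtype.val h).symm
  exact congrArg Subtype.val (hby.trans hcy.symm)

theorem existsUnique_and_of_forall_iff_or {α : Type*} {p q : α → Prop} {a c : α}
    (hp : ∀ x, p x ↔ x = a ∨ x = c) (ha : q a) (hc : ¬ q c) : ∃! x, p x ∧ q x :=
  ⟨a, ⟨(hp a).2 (Or.inl rfl), ha⟩, fun y ⟨hy, hqy⟩ =>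
    ((hp y).1 hy).resolve_right (by rintro rfl; exact hc hqy)⟩

section Gadget

variable {U : Type} {R : U → U → Prop}

-- `GadV` is not reducible, so the simp lemmas about `Sum` do not fire on its elements.
@[simp] theorem GadV.inl_inj {a b : U} : @Eq (GadV R) (Sum.inl a) (Sum.inl b) ↔ a = b :=
  Sum.inl.inj_iff

@[simp] theorem GadV.inr_inj {x y : {p : U × U // R p.1 p.2} × Bool} :
    @Eq (GadV R) (Sum.inr x) (Sum.inr y) ↔ x = y :=
  Sum.inr.inj_iff

theorem gadAdj_inr_iff (e : {p : U × U // R p.1 p.2}) (b : Bool) (x : GadV R) :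
    gadAdj R (Sum.inr (e, b)) x ↔
      x = Sum.inl (if b then e.1.2 else e.1.1) ∨ x = Sum.inr (e, !b) := by
  rcases x with u | ⟨e', _ | _⟩ <;> cases b <;> simp [gadAdj, eq_comm]

theorem gadAdj_inr_inl_iff (e : {p : U × U // R p.1 p.2}) (b : Bool) (a : U) :
    gadAdj R (Sum.inr (e, b)) (Sum.inl a) ↔ a = if b then e.1.2 else e.1.1 := by
  cases b <;> simp [gadAdj, eq_comm]

theorem gadAdj_inl_inr_iff (e : {p : U × U // R p.1 p.2}) (b : Bool) (a : U) :
    gadAdj R (Sum.inl a) (Sum.inr (e, b)) ↔ a = if b then e.1.2 else e.1.1 :=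
  gadAdj_inr_inl_iff e b a

theorem exists_eq_inl_of_gadLab {x : GadV R} (hx : gadLab R x 0 = true) :
    ∃ a, x = Sum.inl a := by
  rcases x with a | ⟨e, _ | _⟩
  · exact ⟨a, rfl⟩
  all_goals exact absurd hx Bool.false_ne_true

theorem gadPath_inl_iff {a b : U} {w v : GadV R} :
    GadPath (gadAdj R) (gadLab R) (Sum.inl a) w v (Sum.inl b) ↔
      ∃ h : R a b, w = Sum.inr (⟨(a, b), h⟩, false) ∧ v = Sum.inr (⟨(a, b), h⟩, true) := by
  constructor
  · rintro ⟨-, hw, hv, -, haw, hwv, hvb⟩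
    rcases w with _ | ⟨⟨⟨a', b'⟩, h'⟩, _ | _⟩ <;>
      rcases v with _ | ⟨⟨⟨a'', b''⟩, h''⟩, _ | _⟩ <;> simp_all [gadAdj, gadLab]
    obtain ⟨rfl, -⟩ := hwv
    exact hvb ▸ h''
  · rintro ⟨h, rfl, rfl⟩
    exact ⟨rfl, rfl, rfl, rfl, Or.inl ⟨rfl, rfl⟩, ⟨rfl, Bool.false_ne_true⟩, Or.inr ⟨rfl, rfl⟩⟩

theorem gadEdge_iff {x y : GadV R} :
    GadEdge (gadAdj R) (gadLab R) x y ↔ ∃ a b, R a b ∧ x = Sum.inl a ∧ y = Sum.inl b := by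
  constructor
  · rintro ⟨w, v, hp⟩
    obtain ⟨a, rfl⟩ := exists_eq_inl_of_gadLab hp.1
    obtain ⟨b, rfl⟩ := exists_eq_inl_of_gadLab hp.2.2.2.1
    exact ⟨a, b, (gadPath_inl_iff.1 hp).1, rfl, rfl⟩
  · rintro ⟨a, b, h, rfl, rfl⟩
    exact ⟨_, _, gadPath_inl_iff.2 ⟨h, rfl, rfl⟩⟩

theorem card_gadPath_inl_of_rel {a b : U} (h : R a b) :
    Nat.card {p : GadV R × GadV R |
      GadPath (gadAdj R) (gadLab R) (Sum.inl a) p.1 p.2 (Sum.inl b)} = 1 := by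
  refine Nat.card_setOf_eq_one_iff.2
    ⟨(Sum.inr (⟨(a, b), h⟩, false), Sum.inr (⟨(a, b), h⟩, true)),
      gadPath_inl_iff.2 ⟨h, rfl, rfl⟩, fun p hp => ?_⟩
  obtain ⟨_, h₁, h₂⟩ := gadPath_inl_iff.1 hp
  exact Prod.ext h₁ h₂

theorem card_gadPath_inl_of_not_rel {a b : U} (h : ¬ R a b) :
    Nat.card {p : GadV R × GadV R |
      GadPath (gadAdj R) (gadLab R) (Sum.inl a) p.1 p.2 (Sum.inl b)} = 0 :=
  Nat.card_eq_zero.2 (Or.inl ⟨fun ⟨_, hp⟩ => h (gadPath_inl_iff.1 hp).1⟩)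

variable (R) in
theorem gad_phi1 : phi1 (gadLab R) := by
  rintro (a | ⟨e, _ | _⟩)
  · exact Or.inl ⟨rfl, rfl, rfl⟩
  · exact Or.inr (Or.inl ⟨rfl, rfl, rfl⟩)
  · exact Or.inr (Or.inr ⟨rfl, rfl, rfl⟩)

variable (R) in
theorem gad_phi2 [Fintype U] : phi2 (gadAdj R) (gadLab R) := by
  have card_adj e b : Nat.card {x | gadAdj R (Sum.inr (e, b)) x} = 2 := by
    have hpair : {x | gadAdj R (Sum.inr (e, b)) x} =
        {Sum.inl (if b then e.1.2 else e.1.1), Sum.inr (e, !b)} := Set.ext (gadAdj_inr_iff e b)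
    rw [Nat.card_coe_set_eq, hpair]
    exact Set.ncard_pair Sum.inl_ne_inr
  have card_adj_end e b :
      Nat.card {x | gadAdj R (Sum.inr (e, b)) x ∧ gadLab R x 0 = true} = 1 :=
    Nat.card_setOf_eq_one_iff.2 <| existsUnique_and_of_forall_iff_or (gadAdj_inr_iff e b) rfl
      (by cases b <;> exact Bool.false_ne_true)
  have card_adj_mid e b : Nat.card
      {x | gadAdj R (Sum.inr (e, b)) x ∧ gadLab R x (if b then 1 else 2) = true} = 1 :=
    Nat.card_setOf_eq_one_iff.2 <| existsUnique_and_of_forall_iff_or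
      (fun x => (gadAdj_inr_iff e b x).trans or_comm) (by cases b <;> rfl)
      (by cases b <;> exact Bool.false_ne_true)
  refine ⟨?_, ?_, ?_⟩
  · rintro (a | ⟨e, _ | _⟩) hv
    · exact absurd hv Bool.false_ne_true
    · exact ⟨card_adj e false, card_adj_end e false, card_adj_mid e false⟩
    · exact absurd hv Bool.false_ne_true
  · rintro (a | ⟨e, _ | _⟩) hv
    · exact absurd hv Bool.false_ne_true
    · exact absurd hv Bool.false_ne_true
    · exact ⟨card_adj e true, card_adj_end e true, card_adj_mid e true⟩
  · rintro (a | ⟨e, _ | _⟩) (a' | ⟨e', _ | _⟩) hu hv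
    all_goals first
      | exact id
      | exact absurd hu Bool.false_ne_true
      | exact absurd hv Bool.false_ne_true

theorem gad_phi3 [Fintype U] (hR : IsStrictLinearOrderRel R) :
    phi3 (gadAdj R) (gadLab R) := by
  obtain ⟨hirr, htrans, htotal⟩ := hR
  intro x y hx hy hne
  obtain ⟨a, rfl⟩ := exists_eq_inl_of_gadLab hx
  obtain ⟨b, rfl⟩ := exists_eq_inl_of_gadLab hy
  rcases htotal a b (fun h => hne (congrArg _ h)) with h | h
  · rw [card_gadPath_inl_of_rel h,
      card_gadPath_inl_of_not_rel fun h' => hirr a (htrans _ _ _ h h')]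
  · rw [card_gadPath_inl_of_not_rel fun h' => hirr a (htrans _ _ _ h' h),
      card_gadPath_inl_of_rel h]

theorem gad_phi4 (hR : IsStrictLinearOrderRel R) : phi4 (gadAdj R) (gadLab R) := by
  obtain ⟨hirr, htrans, -⟩ := hR
  rintro ⟨x, y, z, hxy, hyz, hzx⟩
  obtain ⟨a, b, hab, rfl, rfl⟩ := gadEdge_iff.1 hxy
  obtain ⟨b', c, hbc, hb, rfl⟩ := gadEdge_iff.1 hyz
  obtain ⟨c', a', hca, hc, ha⟩ := gadEdge_iff.1 hzx
  simp only [GadV.inl_inj] at hb hc ha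
  subst hb hc ha
  exact hirr a (htrans _ _ _ hab (htrans _ _ _ hbc hca))

end Gadget

section Comap

variable {V W : Type} {E : W → W → Prop} {lab : W → Fin 3 → Bool} (f : V ≃ W)

theorem phi1_comp (h : phi1 lab) : phi1 (fun v => lab (f v)) :=
  fun v => h (f v)

theorem phi2_comp [Fintype V] [Fintype W] (h : phi2 E lab) :
    phi2 (fun u v => E (f u) (f v)) (fun v => lab (f v)) := by
  obtain ⟨h₂, h₃, h₁⟩ := h
  have hcard := Nat.card_setOf_comp_equiv f
  refine ⟨fun v hv => ?_, fun v hv => ?_, fun u v hu hv => h₁ _ _ hu hv⟩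
  · obtain ⟨c, c₀, c₂⟩ := h₂ (f v) hv
    exact ⟨(hcard (E (f v) ·)).trans c, (hcard fun w => E (f v) w ∧ lab w 0 = true).trans c₀,
      (hcard fun w => E (f v) w ∧ lab w 2 = true).trans c₂⟩
  · obtain ⟨c, c₀, c₁⟩ := h₃ (f v) hv
    exact ⟨(hcard (E (f v) ·)).trans c, (hcard fun w => E (f v) w ∧ lab w 0 = true).trans c₀,
      (hcard fun w => E (f v) w ∧ lab w 1 = true).trans c₁⟩

theorem phi3_comp [Fintype V] [Fintype W] (h : phi3 E lab) :
    phi3 (fun u v => E (f u) (f v)) (fun v => lab (f v)) := by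
  intro u z hu hz hne
  have hcard := Nat.card_setOf_comp_equiv (f.prodCongr f)
  rw [← h (f u) (f z) hu hz (f.injective.ne hne),
    ← hcard fun p => GadPath E lab (f u) p.1 p.2 (f z),
    ← hcard fun p => GadPath E lab (f z) p.1 p.2 (f u)]
  rfl

theorem phi4_comp (h : phi4 E lab) : phi4 (fun u v => E (f u) (f v)) (fun v => lab (f v)) := by
  rintro ⟨u, v, w, ⟨w₁, v₁, p₁⟩, ⟨w₂, v₂, p₂⟩, ⟨w₃, v₃, p₃⟩⟩
  exact h ⟨f u, f v, f w, ⟨f w₁, f v₁, p₁⟩, ⟨f w₂, f v₂, p₂⟩, ⟨f w₃, f v₃, p₃⟩⟩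

end Comap

theorem phi_of_isGadLin {V : Type} [Fintype V] {E : V → V → Prop} {lab : V → Fin 3 → Bool}
    (h : IsGadLin E lab) : phi1 lab ∧ phi2 E lab ∧ phi3 E lab ∧ phi4 E lab := by
  obtain ⟨U, hU, R, hR, f, hE, hlab⟩ := h
  obtain rfl : E = fun u v => gadAdj R (f u) (f v) := funext₂ fun u v => propext (hE u v)
  obtain rfl : lab = fun v => gadLab R (f v) := funext hlab
  exact ⟨phi1_comp f (gad_phi1 R), phi2_comp f (gad_phi2 R), phi3_comp f (gad_phi3 hR),
    phi4_comp f (gad_phi4 hR)⟩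

section Recognition

variable {V : Type} {E : V → V → Prop} {lab : V → Fin 3 → Bool}

theorem phi1.lab_eq (h1 : phi1 lab) {v : V} {i : Fin 3} (hv : lab v i = true) :
    lab v = fun j => decide (j = i) := by
  funext j
  rcases h1 v with ⟨h₀, h₁, h₂⟩ | ⟨h₀, h₁, h₂⟩ | ⟨h₀, h₁, h₂⟩ <;>
    fin_cases i <;> fin_cases j <;> simp_all

theorem phi1.ne_of_lab (h1 : phi1 lab) {v w : V} {i j : Fin 3} (hv : lab v i = true)
    (hw : lab w j = true) (hij : i ≠ j) : v ≠ w := by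
  rintro rfl
  rw [h1.lab_eq hv] at hw
  exact hij (of_decide_eq_true hw).symm

theorem phi2.existsUnique_adj_of_lab_one [Fintype V] (h2 : phi2 E lab) {w : V}
    (hw : lab w 1 = true) {i : Fin 3} (hi : i = 0 ∨ i = 2) : ∃! x, E w x ∧ lab x i = true := by
  rcases hi with rfl | rfl
  exacts [Nat.card_setOf_eq_one_iff.1 (h2.1 w hw).2.1,
    Nat.card_setOf_eq_one_iff.1 (h2.1 w hw).2.2]

theorem phi2.existsUnique_adj_of_lab_two [Fintype V] (h2 : phi2 E lab) {v : V}
    (hv : lab v 2 = true) {i : Fin 3} (hi : i = 0 ∨ i = 1) : ∃! x, E v x ∧ lab x i = true := by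
  rcases hi with rfl | rfl
  exacts [Nat.card_setOf_eq_one_iff.1 (h2.2.1 v hv).2.1,
    Nat.card_setOf_eq_one_iff.1 (h2.2.1 v hv).2.2]

theorem phi2.not_adj_of_lab_one [Fintype V] (h1 : phi1 lab) (h2 : phi2 E lab) {w x : V}
    (hw : lab w 1 = true) (hx : lab x 1 = true) : ¬ E w x := by
  intro hwx
  obtain ⟨a, ⟨hwa, ha⟩, -⟩ := h2.existsUnique_adj_of_lab_one hw (Or.inl rfl)
  obtain ⟨v, ⟨hwv, hv⟩, -⟩ := h2.existsUnique_adj_of_lab_one hw (Or.inr rfl)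
  refine h1.ne_of_lab hv hx (by decide) ?_
  exact eq_of_card_setOf_eq_two (h2.1 w hw).1 hwa hwv hwx
    (h1.ne_of_lab ha hv (by decide)) (h1.ne_of_lab ha hx (by decide))

theorem phi2.not_adj_of_lab_two [Fintype V] (h1 : phi1 lab) (h2 : phi2 E lab) {v x : V}
    (hv : lab v 2 = true) (hx : lab x 2 = true) : ¬ E v x := by
  intro hvx
  obtain ⟨b, ⟨hvb, hb⟩, -⟩ := h2.existsUnique_adj_of_lab_two hv (Or.inl rfl)
  obtain ⟨w, ⟨hvw, hw⟩, -⟩ := h2.existsUnique_adj_of_lab_two hv (Or.inr rfl)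
  refine h1.ne_of_lab hw hx (by decide) ?_
  exact eq_of_card_setOf_eq_two (h2.2.1 v hv).1 hvb hvw hvx
    (h1.ne_of_lab hb hw (by decide)) (h1.ne_of_lab hb hx (by decide))

theorem exists_gadPath_of_lab_one [Fintype V] (hsym : ∀ u v, E u v → E v u)
    (h2 : phi2 E lab) {w : V} (hw : lab w 1 = true) : ∃ a v b, GadPath E lab a w v b := by
  obtain ⟨a, ⟨hwa, ha⟩, -⟩ := h2.existsUnique_adj_of_lab_one hw (Or.inl rfl)
  obtain ⟨v, ⟨hwv, hv⟩, -⟩ := h2.existsUnique_adj_of_lab_one hw (Or.inr rfl)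
  obtain ⟨b, ⟨hvb, hb⟩, -⟩ := h2.existsUnique_adj_of_lab_two hv (Or.inl rfl)
  exact ⟨a, v, b, ha, hw, hv, hb, hsym _ _ hwa, hwv, hvb⟩

theorem exists_gadPath_of_lab_two [Fintype V] (hsym : ∀ u v, E u v → E v u)
    (h2 : phi2 E lab) {v : V} (hv : lab v 2 = true) : ∃ a w b, GadPath E lab a w v b := by
  obtain ⟨w, ⟨hvw, hw⟩, -⟩ := h2.existsUnique_adj_of_lab_two hv (Or.inr rfl)
  obtain ⟨b, ⟨hvb, hb⟩, -⟩ := h2.existsUnique_adj_of_lab_two hv (Or.inl rfl)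
  obtain ⟨a, ⟨hwa, ha⟩, -⟩ := h2.existsUnique_adj_of_lab_one hw (Or.inl rfl)
  exact ⟨a, w, b, ha, hw, hv, hb, hsym _ _ hwa, hsym _ _ hvw, hvb⟩

theorem GadPath.eq_of_eq_second [Fintype V] (hsym : ∀ u v, E u v → E v u) (h2 : phi2 E lab)
    {a w v b a' v' b' : V} (hp : GadPath E lab a w v b) (hq : GadPath E lab a' w v' b') :
    a = a' ∧ v = v' ∧ b = b' := by
  obtain ⟨ha, hw, hv, hb, haw, hwv, hvb⟩ := hp
  obtain ⟨ha', -, hv', hb', haw', hwv', hvb'⟩ := hq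
  obtain rfl := (h2.existsUnique_adj_of_lab_one hw (Or.inr rfl)).unique ⟨hwv, hv⟩ ⟨hwv', hv'⟩
  exact ⟨(h2.existsUnique_adj_of_lab_one hw (Or.inl rfl)).unique ⟨hsym _ _ haw, ha⟩
      ⟨hsym _ _ haw', ha'⟩,
    rfl, (h2.existsUnique_adj_of_lab_two hv (Or.inl rfl)).unique ⟨hvb, hb⟩ ⟨hvb', hb'⟩⟩

theorem GadPath.eq_of_eq_third [Fintype V] (hsym : ∀ u v, E u v → E v u) (h2 : phi2 E lab)
    {a w v b a' w' b' : V} (hp : GadPath E lab a w v b) (hq : GadPath E lab a' w' v b') :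
    a = a' ∧ w = w' ∧ b = b' := by
  obtain rfl := (h2.existsUnique_adj_of_lab_two hp.2.2.1 (Or.inr rfl)).unique
    ⟨hsym _ _ hp.2.2.2.2.2.1, hp.2.1⟩ ⟨hsym _ _ hq.2.2.2.2.2.1, hq.2.1⟩
  obtain ⟨haa', -, hbb'⟩ := hp.eq_of_eq_second hsym h2 hq
  exact ⟨haa', rfl, hbb'⟩

theorem gadEdge_iff_card_pos [Fintype V] {a b : V} :
    GadEdge E lab a b ↔ 0 < Nat.card {p : V × V | GadPath E lab a p.1 p.2 b} := by
  rw [Nat.card_setOf_pos_iff, Prod.exists]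
  rfl

theorem not_gadEdge_self (h4 : phi4 E lab) (a : V) : ¬ GadEdge E lab a a :=
  fun h => h4 ⟨a, a, a, h, h, h⟩

theorem GadEdge.not_gadEdge [Fintype V] (h3 : phi3 E lab) (h4 : phi4 E lab) {a b : V}
    (hab : GadEdge E lab a b) : ¬ GadEdge E lab b a := by
  intro hba
  obtain ⟨w, v, hp⟩ := hab
  have hne : a ≠ b := by rintro rfl; exact not_gadEdge_self h4 a hba
  have := h3 a b hp.1 hp.2.2.2.1 hne
  have := gadEdge_iff_card_pos.1 ⟨w, v, hp⟩
  have := gadEdge_iff_card_pos.1 hba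
  omega

theorem gadEdge_or_gadEdge [Fintype V] (h3 : phi3 E lab) {a b : V} (ha : lab a 0 = true)
    (hb : lab b 0 = true) (hne : a ≠ b) : GadEdge E lab a b ∨ GadEdge E lab b a := by
  have := h3 a b ha hb hne
  simp only [gadEdge_iff_card_pos]
  omega

theorem GadPath.unique [Fintype V] (h3 : phi3 E lab) (h4 : phi4 E lab) {a w v b w' v' : V}
    (hp : GadPath E lab a w v b) (hq : GadPath E lab a w' v' b) : w = w' ∧ v = v' := by
  have hne : a ≠ b := by rintro rfl; exact not_gadEdge_self h4 a ⟨w, v, hp⟩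
  have hcard := h3 a b hp.1 hp.2.2.2.1 hne
  have : Subsingleton {p : V × V | GadPath E lab a p.1 p.2 b} :=
    Finite.card_le_one_iff_subsingleton.1 (by omega)
  have hpq := Subsingleton.elim (⟨(w, v), hp⟩ : {p : V × V | GadPath E lab a p.1 p.2 b})
    ⟨(w', v'), hq⟩
  exact Prod.ext_iff.1 (congrArg Subtype.val hpq)

abbrev P1Node (lab : V → Fin 3 → Bool) : Type := {v : V // lab v 0 = true}

def p1GadEdge (E : V → V → Prop) (lab : V → Fin 3 → Bool) (a b : P1Node lab) : Prop :=
  GadEdge E lab a b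

theorem isStrictLinearOrderRel_p1GadEdge [Fintype V] (h3 : phi3 E lab) (h4 : phi4 E lab) :
    IsStrictLinearOrderRel (p1GadEdge E lab) := by
  have htotal (a b : P1Node lab) (hne : a ≠ b) : p1GadEdge E lab a b ∨ p1GadEdge E lab b a :=
    gadEdge_or_gadEdge h3 a.2 b.2 (Subtype.coe_ne_coe.2 hne)
  refine ⟨fun a => not_gadEdge_self h4 a, fun a b c hab hbc => ?_, htotal⟩
  have hac : a ≠ c := by rintro rfl; exact hab.not_gadEdge h3 h4 hbc
  exact (htotal a c hac).resolve_right fun hca => h4 ⟨a, b, c, hab, hbc, hca⟩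

theorem p1GadEdge.ext {e e' : {p : P1Node lab × P1Node lab // p1GadEdge E lab p.1 p.2}}
    (h₁ : e.1.1.1 = e'.1.1.1) (h₂ : e.1.2.1 = e'.1.2.1) : e = e' :=
  Subtype.ext (Prod.ext (Subtype.ext h₁) (Subtype.ext h₂))

noncomputable def gadRealize : GadV (p1GadEdge E lab) → V
  | Sum.inl a => a.1
  | Sum.inr (e, false) => e.2.choose
  | Sum.inr (e, true) => e.2.choose_spec.choose

theorem gadPath_gadRealize (e : {p : P1Node lab × P1Node lab // p1GadEdge E lab p.1 p.2}) :
    GadPath E lab e.1.1 (gadRealize (Sum.inr (e, false))) (gadRealize (Sum.inr (e, true)))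
      e.1.2 :=
  e.2.choose_spec.choose_spec

theorem lab_gadRealize (h1 : phi1 lab) (x : GadV (p1GadEdge E lab)) :
    lab (gadRealize x) = gadLab (p1GadEdge E lab) x := by
  rcases x with a | ⟨e, _ | _⟩
  · exact h1.lab_eq a.2
  · exact h1.lab_eq (gadPath_gadRealize e).2.1
  · exact h1.lab_eq (gadPath_gadRealize e).2.2.1

theorem gadRealize_injective [Fintype V] (hsym : ∀ u v, E u v → E v u) (h1 : phi1 lab)
    (h2 : phi2 E lab) : Function.Injective (gadRealize (E := E) (lab := lab)) := by
  intro x y hxy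
  have hlab := (lab_gadRealize h1 x).symm.trans (hxy ▸ lab_gadRealize h1 y)
  rcases x with a | ⟨e, _ | _⟩ <;> rcases y with a' | ⟨e', _ | _⟩
  · exact congrArg Sum.inl (Subtype.ext hxy)
  · cases congrFun hlab 0
  · cases congrFun hlab 0
  · cases congrFun hlab 0
  · obtain ⟨ha, -, hb⟩ := (gadPath_gadRealize e).eq_of_eq_second hsym h2
      (hxy ▸ gadPath_gadRealize e')
    rw [p1GadEdge.ext ha hb]
  · cases congrFun hlab 1
  · cases congrFun hlab 0
  · cases congrFun hlab 1
  · obtain ⟨ha, -, hb⟩ := (gadPath_gadRealize e).eq_of_eq_third hsym h2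
      (hxy ▸ gadPath_gadRealize e')
    rw [p1GadEdge.ext ha hb]

theorem gadRealize_surjective [Fintype V] (hsym : ∀ u v, E u v → E v u) (h1 : phi1 lab)
    (h2 : phi2 E lab) (h3 : phi3 E lab) (h4 : phi4 E lab) :
    Function.Surjective (gadRealize (E := E) (lab := lab)) := by
  intro x
  rcases h1 x with ⟨hx, -, -⟩ | ⟨-, hx, -⟩ | ⟨-, -, hx⟩
  · exact ⟨Sum.inl ⟨x, hx⟩, rfl⟩
  · obtain ⟨a, v, b, hp⟩ := exists_gadPath_of_lab_one hsym h2 hx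
    let e : {p : P1Node lab × P1Node lab // p1GadEdge E lab p.1 p.2} :=
      ⟨(⟨a, hp.1⟩, ⟨b, hp.2.2.2.1⟩), x, v, hp⟩
    exact ⟨Sum.inr (e, false), ((gadPath_gadRealize e).unique h3 h4 hp).1⟩
  · obtain ⟨a, w, b, hp⟩ := exists_gadPath_of_lab_two hsym h2 hx
    let e : {p : P1Node lab × P1Node lab // p1GadEdge E lab p.1 p.2} :=
      ⟨(⟨a, hp.1⟩, ⟨b, hp.2.2.2.1⟩), w, x, hp⟩
    exact ⟨Sum.inr (e, true), ((gadPath_gadRealize e).unique h3 h4 hp).2⟩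

theorem adj_gadRealize_inr_inl_iff [Fintype V] (hsym : ∀ u v, E u v → E v u)
    (h2 : phi2 E lab) (e : {p : P1Node lab × P1Node lab // p1GadEdge E lab p.1 p.2})
    (b : Bool) (a : P1Node lab) :
    E (gadRealize (Sum.inr (e, b))) a ↔ a = if b then e.1.2 else e.1.1 := by
  obtain ⟨ha, hw, hv, hb, haw, -, hvb⟩ := gadPath_gadRealize e
  cases b
  · refine ⟨fun h => Subtype.ext ?_, by rintro rfl; exact hsym _ _ haw⟩
    exact (h2.existsUnique_adj_of_lab_one hw (Or.inl rfl)).unique ⟨h, a.2⟩ ⟨hsym _ _ haw, ha⟩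
  · refine ⟨fun h => Subtype.ext ?_, by rintro rfl; exact hvb⟩
    exact (h2.existsUnique_adj_of_lab_two hv (Or.inl rfl)).unique ⟨h, a.2⟩ ⟨hvb, hb⟩

theorem adj_gadRealize_false_true_iff [Fintype V] (hsym : ∀ u v, E u v → E v u)
    (h2 : phi2 E lab) (e e' : {p : P1Node lab × P1Node lab // p1GadEdge E lab p.1 p.2}) :
    E (gadRealize (Sum.inr (e, false))) (gadRealize (Sum.inr (e', true))) ↔ e = e' := by
  refine ⟨fun h => ?_, by rintro rfl; exact (gadPath_gadRealize e).2.2.2.2.2.1⟩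
  have hp := gadPath_gadRealize e
  have hp' := gadPath_gadRealize e'
  have hv := (h2.existsUnique_adj_of_lab_one hp.2.1 (Or.inr rfl)).unique
    ⟨hp.2.2.2.2.2.1, hp.2.2.1⟩ ⟨h, hp'.2.2.1⟩
  obtain ⟨ha, -, hb⟩ := hp.eq_of_eq_third hsym h2 (hv ▸ hp')
  exact p1GadEdge.ext ha hb

theorem adj_gadRealize_inr_inr_iff [Fintype V] (hsym : ∀ u v, E u v → E v u) (h1 : phi1 lab)
    (h2 : phi2 E lab) (e e' : {p : P1Node lab × P1Node lab // p1GadEdge E lab p.1 p.2})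
    (b b' : Bool) : E (gadRealize (Sum.inr (e, b))) (gadRealize (Sum.inr (e', b'))) ↔
      gadAdj (p1GadEdge E lab) (Sum.inr (e, b)) (Sum.inr (e', b')) := by
  have hp := gadPath_gadRealize e
  have hp' := gadPath_gadRealize e'
  cases b <;> cases b'
  · exact iff_of_false (h2.not_adj_of_lab_one h1 hp.2.1 hp'.2.1) fun h => h.2 rfl
  · exact (adj_gadRealize_false_true_iff hsym h2 e e').trans
      (and_iff_left Bool.false_ne_true).symm
  · exact (Iff.intro (hsym _ _) (hsym _ _)).trans <|
      (adj_gadRealize_false_true_iff hsym h2 e' e).trans <|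
        eq_comm.trans (and_iff_left Bool.false_ne_true.symm).symm
  · exact iff_of_false (h2.not_adj_of_lab_two h1 hp.2.2.1 hp'.2.2.1) fun h => h.2 rfl

theorem adj_gadRealize_iff [Fintype V] (hsym : ∀ u v, E u v → E v u) (h1 : phi1 lab)
    (h2 : phi2 E lab) (x y : GadV (p1GadEdge E lab)) :
    E (gadRealize x) (gadRealize y) ↔ gadAdj (p1GadEdge E lab) x y := by
  rcases x with a | ⟨e, b⟩ <;> rcases y with a' | ⟨e', b'⟩
  · exact iff_of_false (h2.2.2 _ _ a.2 a'.2) id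
  · exact (Iff.intro (hsym _ _) (hsym _ _)).trans <|
      (adj_gadRealize_inr_inl_iff hsym h2 e' b' a).trans (gadAdj_inl_inr_iff e' b' a).symm
  · exact (adj_gadRealize_inr_inl_iff hsym h2 e b a').trans (gadAdj_inr_inl_iff e b a').symm
  · exact adj_gadRealize_inr_inr_iff hsym h1 h2 e e' b b'

theorem isGadLin_of_phi [Fintype V] (hsym : ∀ u v, E u v → E v u) (h1 : phi1 lab)
    (h2 : phi2 E lab) (h3 : phi3 E lab) (h4 : phi4 E lab) : IsGadLin E lab := by
  let G := Equiv.ofBijective gadRealize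
    ⟨gadRealize_injective hsym h1 h2, gadRealize_surjective hsym h1 h2 h3 h4⟩
  have hG : ∀ u, gadRealize (G.symm u) = u := G.apply_symm_apply
  refine ⟨P1Node lab, inferInstance, p1GadEdge E lab, isStrictLinearOrderRel_p1GadEdge h3 h4,
    G.symm, fun u v => ?_, fun v => ?_⟩
  · simpa only [hG] using adj_gadRealize_iff hsym h1 h2 (G.symm u) (G.symm v)
  · simpa only [hG] using lab_gadRealize h1 (G.symm v)

end Recognition

theorem stmt9_general {V : Type} [Fintype V] (E : V → V → Prop) (lab : V → Fin 3 → Bool)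
    (hsym : ∀ u v, E u v → E v u) :
    IsGadLin E lab ↔ (phi1 lab ∧ phi2 E lab ∧ phi3 E lab ∧ phi4 E lab) :=
  ⟨phi_of_isGadLin, fun ⟨h1, h2, h3, h4⟩ => isGadLin_of_phi hsym h1 h2 h3 h4⟩

/-- a finite undirected labelled graph of dimension 3 is isomorphic to the
gadgetisation of a strict linear order iff it satisfies φ₁, φ₂, φ₃ and φ₄. -/
theorem stmt9 {V : Type} [Fintype V] (E : V → V → Prop) (lab : V → Fin 3 → Bool)
    (hsym : ∀ u v, E u v → E v u) (hirr : ∀ v, ¬ E v v) :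
    IsGadLin E lab ↔ (phi1 lab ∧ phi2 E lab ∧ phi3 E lab ∧ phi4 E lab) :=
  stmt9_general E lab hsym
end
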